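/- Let n ≥ 6 and let κ be a content with Σ_i κ_i = n. Then there exists an injection ι from 𝒴_{(3,2)}(κ) into 𝒴_{(2,3)}(κ) such that r(ι(y)) = r(y) for every y, and whose image is exactly 𝒴_{(2,3)}(κ) \ 𝒴(κ; (1,2,1,2,3,3)). -/

import Mathlib

/-!
The `k`-th letter of a Yamanouchi word is at most `k`, so when `κ 0 = 0` the first five
letters of a word of `𝒴_{(3,2)}(κ)` are found by a finite check: they are `12312` or `12314`;
likewise a word of `𝒴_{(2,3)}(κ)` starts with `12123` or `12134`. The map `ι` swaps
`12312 ↔ 12123` and `12314 ↔ 12134` and keeps the rest of the word. Each swap permutes a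
Yamanouchi prefix into a Yamanouchi prefix, so content and the Yamanouchi property survive, and
the runs after the prefix are untouched as long as the next letter still starts a new run. Going
back from `12123`, that fails exactly when the next letter is `3`, which is the excluded prefix
`121233`.
-/

open scoped Classical

noncomputable section

/-- The list of lengths of the maximal strictly increasing runs of a word, in order
(the run type `τ_y`); its length is the number of runs `r(y)`. -/
def runLengths : List ℕ → List ℕ
  | [] => []
  | [_] => [1]
  | a :: b :: l =>
    if a < b then
      match runLengths (b :: l) with
      | [] => [1]
      | c :: cs => (c + 1) :: cs
    else 1 :: runLengths (b :: l)

/-- `y` belongs to `𝒴(κ)`: the word `y` has content `κ` (the letter `i` occurs `κ i` times;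
in particular all letters are positive when `κ 0 = 0`), is Yamanouchi (in every prefix, `i+1`
occurs at most as often as `i`, for every `i ≥ 1`), and every run of `y` except possibly the
last has length at least `2`. -/
def MemYam (κ : ℕ → ℕ) (y : List ℕ) : Prop :=
  (∀ i, y.count i = κ i) ∧
  (∀ m i, 1 ≤ i → ((y.take m).count (i + 1) : ℕ) ≤ (y.take m).count i) ∧
  (∀ l ∈ (runLengths y).dropLast, 2 ≤ l)

/-- The set `𝒴_α(κ)` of words in `𝒴(κ)` whose run type has `α` as a prefix. -/
def yamRT (κ : ℕ → ℕ) (α : List ℕ) : Set (List ℕ) :=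
  {y | MemYam κ y ∧ α <+: runLengths y}

/-- The set `𝒴(κ; β)` of words in `𝒴(κ)` having the word `β` as a prefix. -/
def yamPre (κ : ℕ → ℕ) (β : List ℕ) : Set (List ℕ) :=
  {y | MemYam κ y ∧ β <+: y}

/-- No run of `p ++ t` straddles the junction of `p` and `t`. -/
def IsRunCut (p t : List ℕ) : Prop :=
  ∀ a ∈ p.getLast?, ∀ b ∈ t.head?, b ≤ a

theorem runLengths_cons_cons_of_lt {a b c : ℕ} {l cs : List ℕ} (h : a < b)
    (hc : runLengths (b :: l) = c :: cs) : runLengths (a :: b :: l) = (c + 1) :: cs := by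
  rw [runLengths, if_pos h, hc]

theorem runLengths_cons_cons_of_not_lt {a b : ℕ} {l : List ℕ} (h : ¬ a < b) :
    runLengths (a :: b :: l) = 1 :: runLengths (b :: l) := by
  rw [runLengths, if_neg h]

theorem exists_runLengths_cons_eq_cons (a : ℕ) (l : List ℕ) :
    ∃ c cs, runLengths (a :: l) = c :: cs := by
  induction l generalizing a with
  | nil => exact ⟨1, [], rfl⟩
  | cons b l ih =>
    by_cases h : a < b
    · obtain ⟨c, cs, hc⟩ := ih b
      exact ⟨c + 1, cs, runLengths_cons_cons_of_lt h hc⟩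
    · exact ⟨1, _, runLengths_cons_cons_of_not_lt h⟩

theorem sum_runLengths (y : List ℕ) : (runLengths y).sum = y.length := by
  induction y with
  | nil => rfl
  | cons a l ih =>
    rcases l with _ | ⟨b, l⟩
    · rfl
    · by_cases h : a < b
      · obtain ⟨c, cs, hc⟩ := exists_runLengths_cons_eq_cons b l
        rw [hc] at ih
        simp only [runLengths_cons_cons_of_lt h hc, List.sum_cons, List.length_cons] at ih ⊢
        omega
      · simp only [runLengths_cons_cons_of_not_lt h, List.sum_cons, ih, List.length_cons]
        omega

theorem isRunCut_cons_cons {a a' : ℕ} {p t : List ℕ} :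
    IsRunCut (a :: a' :: p) t ↔ IsRunCut (a' :: p) t := by
  simp only [IsRunCut, List.getLast?_cons_cons]

theorem runLengths_append {p t : List ℕ} (h : IsRunCut p t) :
    runLengths (p ++ t) = runLengths p ++ runLengths t := by
  induction p with
  | nil => rfl
  | cons a p ih =>
    rcases p with _ | ⟨a', p⟩
    · rcases t with _ | ⟨b, t⟩
      · rfl
      · have hba : ¬ a < b := by simpa [IsRunCut] using h
        exact runLengths_cons_cons_of_not_lt hba
    · have ih := ih (isRunCut_cons_cons.mp h)
      obtain ⟨c, cs, hc⟩ := exists_runLengths_cons_eq_cons a' p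
      rw [hc] at ih
      simp only [List.cons_append] at ih ⊢
      by_cases hlt : a < a'
      · rw [runLengths_cons_cons_of_lt hlt ih, runLengths_cons_cons_of_lt hlt hc]
        rfl
      · rw [runLengths_cons_cons_of_not_lt hlt, runLengths_cons_cons_of_not_lt hlt, ih, hc]
        rfl

theorem IsRunCut.append {p₁ p₂ t : List ℕ} (h₁ : IsRunCut p₁ (p₂ ++ t))
    (h₂ : IsRunCut p₂ t) : IsRunCut p₁ p₂ ∧ IsRunCut (p₁ ++ p₂) t := by
  rcases p₂ with _ | ⟨b, p₂⟩
  · exact ⟨by simp [IsRunCut], by simpa using h₁⟩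
  · constructor
    · simpa [IsRunCut] using h₁
    · simpa [IsRunCut, List.getLast?_append] using h₂

theorem exists_append_of_runLengths_eq_cons {y s : List ℕ} {c : ℕ}
    (h : runLengths y = c :: s) :
    ∃ p t, y = p ++ t ∧ runLengths p = [c] ∧ runLengths t = s ∧ IsRunCut p t := by
  induction y generalizing c s with
  | nil => cases h
  | cons a l ih =>
    rcases l with _ | ⟨b, l⟩
    · obtain ⟨rfl, rfl⟩ := List.cons_eq_cons.mp h
      exact ⟨[a], [], rfl, rfl, rfl, by simp [IsRunCut]⟩
    · by_cases hlt : a < b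
      · obtain ⟨c', s', hc'⟩ := exists_runLengths_cons_eq_cons b l
        rw [runLengths_cons_cons_of_lt hlt hc'] at h
        obtain ⟨rfl, rfl⟩ := List.cons_eq_cons.mp h
        obtain ⟨p, t, hpt, hp, ht, hcut⟩ := ih hc'
        rcases p with _ | ⟨b', p⟩
        · cases hp
        obtain ⟨rfl, rfl⟩ := List.cons_eq_cons.mp hpt
        exact ⟨a :: b :: p, t, rfl, runLengths_cons_cons_of_lt hlt hp, ht,
          isRunCut_cons_cons.mpr hcut⟩
      · rw [runLengths_cons_cons_of_not_lt hlt] at h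
        obtain ⟨rfl, rfl⟩ := List.cons_eq_cons.mp h
        exact ⟨[a], b :: l, rfl, rfl, rfl, by simpa [IsRunCut] using hlt⟩

theorem exists_append_of_runLengths_eq_append {y s : List ℕ} {α : List ℕ}
    (h : runLengths y = α ++ s) :
    ∃ p t, y = p ++ t ∧ runLengths p = α ∧ runLengths t = s ∧ IsRunCut p t := by
  induction α generalizing y with
  | nil => exact ⟨[], y, rfl, rfl, h, by simp [IsRunCut]⟩
  | cons c α ih =>
    obtain ⟨p₁, t₁, rfl, hp₁, ht₁, hcut₁⟩ := exists_append_of_runLengths_eq_cons h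
    obtain ⟨p₂, t, rfl, hp₂, ht, hcut₂⟩ := ih ht₁
    obtain ⟨hcut₁₂, hcut⟩ := hcut₁.append hcut₂
    exact ⟨p₁ ++ p₂, t, (List.append_assoc _ _ _).symm,
      by rw [runLengths_append hcut₁₂, hp₁, hp₂]; rfl, ht, hcut⟩

theorem mem_yamRT_iff {κ : ℕ → ℕ} {α y : List ℕ} :
    y ∈ yamRT κ α ↔
      MemYam κ y ∧ ∃ p t, y = p ++ t ∧ runLengths p = α ∧ IsRunCut p t := by
  constructor
  · rintro ⟨hy, s, hs⟩
    obtain ⟨p, t, rfl, hp, -, hcut⟩ := exists_append_of_runLengths_eq_append hs.symm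
    exact ⟨hy, p, t, rfl, hp, hcut⟩
  · rintro ⟨hy, p, t, rfl, rfl, hcut⟩
    exact ⟨hy, runLengths t, (runLengths_append hcut).symm⟩

def IsYamanouchi (y : List ℕ) : Prop :=
  ∀ m i, 1 ≤ i → (y.take m).count (i + 1) ≤ (y.take m).count i

namespace IsYamanouchi

theorem take {y : List ℕ} (h : IsYamanouchi y) (k : ℕ) : IsYamanouchi (y.take k) := by
  intro m i hi
  rw [List.take_take]
  exact h _ i hi

theorem of_append {p t : List ℕ} (h : IsYamanouchi (p ++ t)) : IsYamanouchi p := by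
  simpa [List.take_left'] using h.take p.length

theorem mem_of_succ_mem {y : List ℕ} (h : IsYamanouchi y) {i : ℕ} (hi : 1 ≤ i)
    (hmem : i + 1 ∈ y) : i ∈ y := by
  have := h y.length i hi
  rw [List.take_length] at this
  exact List.count_pos_iff.mp ((List.count_pos_iff.mpr hmem).trans_le this)

theorem le_length_of_mem {y : List ℕ} (h : IsYamanouchi y) {x : ℕ} (hx : x ∈ y) :
    x ≤ y.length := by
  have hsub : Finset.Icc 1 x ⊆ y.toFinset := by
    intro j hj
    obtain ⟨hj1, hjx⟩ := Finset.mem_Icc.mp hj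
    clear hj
    rw [List.mem_toFinset]
    induction hjx using Nat.decreasingInduction with
    | self => exact hx
    | of_succ k _ ih => exact h.mem_of_succ_mem hj1 (ih (by omega))
  simpa using (Finset.card_le_card hsub).trans (List.toFinset_card_le y)

theorem getElem_le {y : List ℕ} (h : IsYamanouchi y) (k : ℕ) (hk : k < y.length) :
    y[k] ≤ k + 1 := by
  have hk' : k < (y.take (k + 1)).length := by simp [hk]
  have := (h.take (k + 1)).le_length_of_mem (List.getElem_mem hk')
  simp only [List.getElem_take, List.length_take] at this
  omega

theorem append_of_perm {p q t : List ℕ} (h : IsYamanouchi (p ++ t)) (hpq : p.Perm q)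
    (hq : IsYamanouchi q) : IsYamanouchi (q ++ t) := by
  intro m i hi
  simp only [List.take_append, List.count_append]
  by_cases hm : m ≤ q.length
  · simpa [Nat.sub_eq_zero_of_le hm] using hq m i hi
  · have hlen := hpq.length_eq
    have := h m i hi
    simp only [List.take_append, List.count_append,
      List.take_of_length_le (by omega : p.length ≤ m), hlen] at this
    rwa [List.take_of_length_le (by omega), ← hpq.count_eq, ← hpq.count_eq]

theorem forall_of_length_eq_five {P : List ℕ → Prop}
    (h : ∀ a ≤ 1, ∀ b ≤ 2, ∀ c ≤ 3, ∀ d ≤ 4, ∀ e ≤ 5, P [a, b, c, d, e])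
    {w : List ℕ} (hw : IsYamanouchi w) (hlen : w.length = 5) : P w := by
  match w, hlen with
  | [a, b, c, d, e], _ =>
    exact h a (hw.getElem_le 0 (by simp)) b (hw.getElem_le 1 (by simp))
      c (hw.getElem_le 2 (by simp)) d (hw.getElem_le 3 (by simp)) e (hw.getElem_le 4 (by simp))

end IsYamanouchi

theorem isYamanouchi_iff {y : List ℕ} :
    IsYamanouchi y ↔
      ∀ m ≤ y.length, ∀ x ∈ y, 2 ≤ x →
        (y.take m).count x ≤ (y.take m).count (x - 1) := by
  refine ⟨fun h m _ x _ hx => ?_, fun h m i hi => ?_⟩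
  · simpa [Nat.sub_add_cancel (by omega : 1 ≤ x)] using h m (x - 1) (by omega)
  · by_cases hmem : i + 1 ∈ y
    · have hm : y.take m = y.take (min m y.length) := by
        rw [← List.take_take, List.take_length]
      rw [hm]
      simpa using h _ (min_le_right _ _) (i + 1) hmem (by omega)
    · rw [List.count_eq_zero_of_not_mem (fun h' => hmem (List.mem_of_mem_take h'))]
      exact Nat.zero_le _

instance : DecidablePred IsYamanouchi := fun _ => decidable_of_iff _ isYamanouchi_iff.symm

theorem MemYam.isYamanouchi {κ : ℕ → ℕ} {y : List ℕ} (h : MemYam κ y) : IsYamanouchi y :=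
  h.2.1

theorem MemYam.zero_not_mem {κ : ℕ → ℕ} {y : List ℕ} (h : MemYam κ y) (hκ0 : κ 0 = 0) :
    0 ∉ y := by
  rw [← List.count_eq_zero, h.1, hκ0]

theorem forall_mem_dropLast_append_iff {α : Type*} {P : α → Prop} {u s : List α}
    (hu : ∀ x ∈ u, P x) : (∀ x ∈ (u ++ s).dropLast, P x) ↔ ∀ x ∈ s.dropLast, P x := by
  rcases eq_or_ne s [] with rfl | hs
  · simpa using fun x hx => hu x (List.mem_of_mem_dropLast hx)
  · rw [List.dropLast_append_of_ne_nil hs]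
    simp only [List.mem_append]
    exact ⟨fun h x hx => h x (Or.inr hx), fun h x hx => hx.elim (hu x) (h x)⟩

theorem MemYam.append_of_perm {κ : ℕ → ℕ} {p q t : List ℕ} (h : MemYam κ (p ++ t))
    (hpq : p.Perm q) (hq : IsYamanouchi q) (hpt : IsRunCut p t) (hqt : IsRunCut q t)
    (hp₂ : ∀ l ∈ runLengths p, 2 ≤ l) (hq₂ : ∀ l ∈ runLengths q, 2 ≤ l) :
    MemYam κ (q ++ t) := by
  obtain ⟨hcount, hyam, hruns⟩ := h
  refine ⟨fun i => ?_, IsYamanouchi.append_of_perm hyam hpq hq, ?_⟩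
  · rw [← hcount, (hpq.append_right t).count_eq]
  · rw [runLengths_append hpt, forall_mem_dropLast_append_iff hp₂] at hruns
    rwa [runLengths_append hqt, forall_mem_dropLast_append_iff hq₂]

-- Without the larger bound, instance search gives up on the nested bounded quantifiers and
-- `open scoped Classical` supplies a non-computable instance that `decide` cannot evaluate.
set_option synthInstance.maxSize 4096 in
theorem runLengths_eq_three_two_iff {w : List ℕ} (hw : IsYamanouchi w) (h0 : 0 ∉ w) :
    runLengths w = [3, 2] ↔ w ∈ [[1, 2, 3, 1, 2], [1, 2, 3, 1, 4]] := by
  constructor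
  · intro hr
    exact hw.forall_of_length_eq_five
      (P := fun w => runLengths w = [3, 2] → 0 ∉ w → IsYamanouchi w →
        w ∈ [[1, 2, 3, 1, 2], [1, 2, 3, 1, 4]])
      (by decide) (by rw [← sum_runLengths, hr]; rfl) hr h0 hw
  · intro h
    simp only [List.mem_cons, List.not_mem_nil, or_false] at h
    rcases h with rfl | rfl <;> rfl

set_option synthInstance.maxSize 4096 in
theorem runLengths_eq_two_three_iff {w : List ℕ} (hw : IsYamanouchi w) (h0 : 0 ∉ w) :
    runLengths w = [2, 3] ↔ w ∈ [[1, 2, 1, 2, 3], [1, 2, 1, 3, 4]] := by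
  constructor
  · intro hr
    exact hw.forall_of_length_eq_five
      (P := fun w => runLengths w = [2, 3] → 0 ∉ w → IsYamanouchi w →
        w ∈ [[1, 2, 1, 2, 3], [1, 2, 1, 3, 4]])
      (by decide) (by rw [← sum_runLengths, hr]; rfl) hr h0 hw
  · intro h
    simp only [List.mem_cons, List.not_mem_nil, or_false] at h
    rcases h with rfl | rfl <;> rfl

theorem mem_yamRT_iff_of_runLengths_iff {κ : ℕ → ℕ} (hκ0 : κ 0 = 0) {α : List ℕ}
    {S : List (List ℕ)}
    (hS : ∀ p, IsYamanouchi p → 0 ∉ p → (runLengths p = α ↔ p ∈ S))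
    {y : List ℕ} :
    y ∈ yamRT κ α ↔ MemYam κ y ∧ ∃ p ∈ S, ∃ t, y = p ++ t ∧ IsRunCut p t := by
  rw [mem_yamRT_iff]
  refine and_congr_right fun hy => ?_
  have hprefix : ∀ p t, y = p ++ t → (runLengths p = α ↔ p ∈ S) := by
    rintro p t rfl
    exact hS p hy.isYamanouchi.of_append (hy.zero_not_mem hκ0 <| List.mem_append_left t ·)
  constructor
  · rintro ⟨p, t, hpt, hp, hcut⟩
    exact ⟨p, (hprefix p t hpt).1 hp, t, hpt, hcut⟩
  · rintro ⟨p, hp, t, hpt, hcut⟩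
    exact ⟨p, t, hpt, (hprefix p t hpt).2 hp, hcut⟩

theorem mem_yamRT_three_two_iff {κ : ℕ → ℕ} (hκ0 : κ 0 = 0) {y : List ℕ} :
    y ∈ yamRT κ [3, 2] ↔
      MemYam κ y ∧
        ∃ p ∈ [[1, 2, 3, 1, 2], [1, 2, 3, 1, 4]], ∃ t, y = p ++ t ∧ IsRunCut p t :=
  mem_yamRT_iff_of_runLengths_iff hκ0 fun _ => runLengths_eq_three_two_iff

theorem mem_yamRT_two_three_iff {κ : ℕ → ℕ} (hκ0 : κ 0 = 0) {y : List ℕ} :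
    y ∈ yamRT κ [2, 3] ↔
      MemYam κ y ∧
        ∃ p ∈ [[1, 2, 1, 2, 3], [1, 2, 1, 3, 4]], ∃ t, y = p ++ t ∧ IsRunCut p t :=
  mem_yamRT_iff_of_runLengths_iff hκ0 fun _ => runLengths_eq_two_three_iff

def swapPrefix : List ℕ → List ℕ
  | 1 :: 2 :: 3 :: 1 :: 2 :: t => 1 :: 2 :: 1 :: 2 :: 3 :: t
  | 1 :: 2 :: 3 :: 1 :: 4 :: t => 1 :: 2 :: 1 :: 3 :: 4 :: t
  | 1 :: 2 :: 1 :: 2 :: 3 :: t => 1 :: 2 :: 3 :: 1 :: 2 :: t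
  | 1 :: 2 :: 1 :: 3 :: 4 :: t => 1 :: 2 :: 3 :: 1 :: 4 :: t
  | y => y

theorem swapPrefix_involutive : Function.Involutive swapPrefix := by
  intro y
  fun_cases swapPrefix y
  case case5 h₁ h₂ h₃ h₄ => exact swapPrefix.eq_5 y h₁ h₂ h₃ h₄
  all_goals rfl

theorem swapPrefix_of_mem_yamRT_three_two {κ : ℕ → ℕ} (hκ0 : κ 0 = 0) {y : List ℕ}
    (hy : y ∈ yamRT κ [3, 2]) :
    swapPrefix y ∈ yamRT κ [2, 3] \ yamPre κ [1, 2, 1, 2, 3, 3] ∧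
      (runLengths (swapPrefix y)).length = (runLengths y).length := by
  obtain ⟨hy, p, hp, t, rfl, hpt⟩ :=
    (mem_yamRT_three_two_iff hκ0).1 hy
  simp only [List.mem_cons, List.not_mem_nil, or_false] at hp
  rcases hp with rfl | rfl
  · rw [show swapPrefix ([1, 2, 3, 1, 2] ++ t) = [1, 2, 1, 2, 3] ++ t from rfl]
    have ht : ∀ b ∈ t.head?, b ≤ 2 := by simpa [IsRunCut] using hpt
    have hqt : IsRunCut [1, 2, 1, 2, 3] t := by
      simpa [IsRunCut] using fun b hb => (ht b hb).trans (by norm_num)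
    have hmem := hy.append_of_perm (by decide) (by decide) hpt hqt (by decide) (by decide)
    refine ⟨⟨(mem_yamRT_two_three_iff hκ0).2 ⟨hmem, _, by simp, t, rfl, hqt⟩, ?_⟩, ?_⟩
    · rintro ⟨-, u, hu⟩
      obtain rfl : t = 3 :: u := by simpa using hu.symm
      simp at ht
    · rw [runLengths_append hpt, runLengths_append hqt]
      rfl
  · rw [show swapPrefix ([1, 2, 3, 1, 4] ++ t) = [1, 2, 1, 3, 4] ++ t from rfl]
    have hqt : IsRunCut [1, 2, 1, 3, 4] t := by simpa [IsRunCut] using hpt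
    have hmem := hy.append_of_perm (by decide) (by decide) hpt hqt (by decide) (by decide)
    refine ⟨⟨(mem_yamRT_two_three_iff hκ0).2 ⟨hmem, _, by simp, t, rfl, hqt⟩, ?_⟩, ?_⟩
    · rintro ⟨-, u, hu⟩
      simp at hu
    · rw [runLengths_append hpt, runLengths_append hqt]
      rfl

theorem swapPrefix_mem_yamRT_three_two_of_mem_sdiff {κ : ℕ → ℕ} (hκ0 : κ 0 = 0)
    {z : List ℕ} (hz : z ∈ yamRT κ [2, 3] \ yamPre κ [1, 2, 1, 2, 3, 3]) :
    swapPrefix z ∈ yamRT κ [3, 2] := by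
  obtain ⟨hz, hnot⟩ := hz
  obtain ⟨hz, q, hq, t, rfl, hqt⟩ :=
    (mem_yamRT_two_three_iff hκ0).1 hz
  simp only [List.mem_cons, List.not_mem_nil, or_false] at hq
  rcases hq with rfl | rfl
  · rw [show swapPrefix ([1, 2, 1, 2, 3] ++ t) = [1, 2, 3, 1, 2] ++ t from rfl]
    have hpt : IsRunCut [1, 2, 3, 1, 2] t := by
      rcases t with _ | ⟨b, u⟩
      · simp [IsRunCut]
      · have hb3 : b ≤ 3 := by simpa [IsRunCut] using hqt
        have hb : b ≠ 3 := by
          rintro rfl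
          exact hnot ⟨hz, u, rfl⟩
        simpa [IsRunCut] using (by omega : b ≤ 2)
    exact (mem_yamRT_three_two_iff hκ0).2
      ⟨hz.append_of_perm (by decide) (by decide) hqt hpt (by decide) (by decide),
        _, by simp, t, rfl, hpt⟩
  · rw [show swapPrefix ([1, 2, 1, 3, 4] ++ t) = [1, 2, 3, 1, 4] ++ t from rfl]
    have hpt : IsRunCut [1, 2, 3, 1, 4] t := by simpa [IsRunCut] using hqt
    exact (mem_yamRT_three_two_iff hκ0).2
      ⟨hz.append_of_perm (by decide) (by decide) hqt hpt (by decide) (by decide),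
        _, by simp, t, rfl, hpt⟩

theorem bijOn_swapPrefix {κ : ℕ → ℕ} (hκ0 : κ 0 = 0) :
    Set.BijOn swapPrefix (yamRT κ [3, 2]) (yamRT κ [2, 3] \ yamPre κ [1, 2, 1, 2, 3, 3]) :=
  Set.InvOn.bijOn ⟨fun y _ => swapPrefix_involutive y, fun y _ => swapPrefix_involutive y⟩
    (fun _ hy => (swapPrefix_of_mem_yamRT_three_two hκ0 hy).1)
    (fun _ hz => swapPrefix_mem_yamRT_three_two_of_mem_sdiff hκ0 hz)

theorem exists_injection_yam_32_23_general (κ : ℕ →₀ ℕ)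
    (hκ0 : κ 0 = 0) :
    ∃ ι : List ℕ → List ℕ,
      Set.InjOn ι (yamRT κ [3, 2]) ∧
      (∀ y ∈ yamRT κ [3, 2], (runLengths (ι y)).length = (runLengths y).length) ∧
      ι '' yamRT κ [3, 2] = yamRT κ [2, 3] \ yamPre κ [1, 2, 1, 2, 3, 3] := by
  have hbij := bijOn_swapPrefix hκ0
  exact ⟨swapPrefix, hbij.injOn, fun _ hy => (swapPrefix_of_mem_yamRT_three_two hκ0 hy).2,
    hbij.image_eq⟩

/-- For `n ≥ 6` and any content `κ` with `Σᵢ κᵢ = n`, there is an injection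
`ι : 𝒴_{(3,2)}(κ) → 𝒴_{(2,3)}(κ)` preserving the number of runs, whose image is exactly
`𝒴_{(2,3)}(κ) \ 𝒴(κ; (1,2,1,2,3,3))`. -/
theorem exists_injection_yam_32_23 (n : ℕ) (κ : ℕ →₀ ℕ) (hn : 6 ≤ n)
    (hκ0 : κ 0 = 0) (hκ : κ.sum (fun _ m => m) = n) :
    ∃ ι : List ℕ → List ℕ,
      Set.InjOn ι (yamRT κ [3, 2]) ∧
      (∀ y ∈ yamRT κ [3, 2], (runLengths (ι y)).length = (runLengths y).length) ∧
      ι '' yamRT κ [3, 2] = yamRT κ [2, 3] \ yamPre κ [1, 2, 1, 2, 3, 3] :=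
  exists_injection_yam_32_23_general κ hκ0

end
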